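/- (Bolker–Roth) Let d+1 ≤ a, b with a + b ≤ (d+2 choose 2), and let p be a generic configuration of the complete bipartite graph K_{a,b} in ℝ^d. Then the real vector space Ω(K_{a,b}, p) of equilibrium stresses of the framework (K_{a,b}, p) has dimension (a − d − 1)(b − d − 1). -/

import Mathlib

open scoped Classical

noncomputable section

/-- Two configurations are equivalent if corresponding edge lengths agree. -/
def Equivalent {d : ℕ} {V : Type*} (G : SimpleGraph V)
    (p q : V → EuclideanSpace ℝ (Fin d)) : Prop :=
  ∀ u v, G.Adj u v → ‖p u - p v‖ = ‖q u - q v‖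

/-- Two configurations are congruent if all pairwise distances agree. -/
def FrameworkCongruent {d : ℕ} {V : Type*} (p q : V → EuclideanSpace ℝ (Fin d)) : Prop :=
  ∀ u v, ‖p u - p v‖ = ‖q u - q v‖

/-- A configuration is generic if the coordinates of its points are
algebraically independent over `ℚ`. -/
def Generic {d : ℕ} {V : Type*} (p : V → EuclideanSpace ℝ (Fin d)) : Prop :=
  AlgebraicIndependent ℚ (fun x : V × Fin d => p x.1 x.2)

/-- A framework `(G, p)` is locally rigid if all equivalent configurations
sufficiently close to `p` are congruent to `p`. -/
def LocallyRigid {d : ℕ} {V : Type*} (G : SimpleGraph V)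
    (p : V → EuclideanSpace ℝ (Fin d)) : Prop :=
  ∃ ε > 0, ∀ q, Equivalent G p q → (∀ v, ‖q v - p v‖ < ε) → FrameworkCongruent p q

/-- Generic local rigidity in `ℝ^d`. -/
def GLR (d : ℕ) {V : Type*} (G : SimpleGraph V) : Prop :=
  ∀ p : V → EuclideanSpace ℝ (Fin d), Generic p → LocallyRigid G p

/-- Generic global rigidity in `ℝ^d`. -/
def GGR (d : ℕ) {V : Type*} (G : SimpleGraph V) : Prop :=
  ∀ p : V → EuclideanSpace ℝ (Fin d), Generic p →
    ∀ q, Equivalent G p q → FrameworkCongruent p q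

/-- Generic redundant rigidity in `ℝ^d`: deleting any edge leaves a GLR graph. -/
def GRR (d : ℕ) {V : Type*} (G : SimpleGraph V) : Prop :=
  ∀ e ∈ G.edgeSet, GLR d (G.deleteEdges {e})

/-- `G` is `k`-connected: at least `k+1` vertices, and removing any at most
`k-1` vertices leaves a connected induced subgraph. -/
def KConnected (k : ℕ) {V : Type*} [Fintype V] (G : SimpleGraph V) : Prop :=
  k + 1 ≤ Fintype.card V ∧
    ∀ S : Finset V, S.card ≤ k - 1 → (G.induce ((↑S : Set V)ᶜ)).Connected

/-- The join `G + H` of two graphs: all edges of `G`, all edges of `H`, and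
all cross edges. -/
def graphJoin {α β : Type*} (G : SimpleGraph α) (H : SimpleGraph β) :
    SimpleGraph (α ⊕ β) :=
  SimpleGraph.fromRel (fun x y =>
    (∃ a b, x = Sum.inl a ∧ y = Sum.inl b ∧ G.Adj a b) ∨
    (∃ a b, x = Sum.inr a ∧ y = Sum.inr b ∧ H.Adj a b) ∨
    (x.isLeft ∧ y.isRight))

/-- The disjoint union `G ∪ H` of two graphs. -/
def disjUnion {α β : Type*} (G : SimpleGraph α) (H : SimpleGraph β) :
    SimpleGraph (α ⊕ β) :=
  SimpleGraph.fromRel (fun x y =>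
    (∃ a b, x = Sum.inl a ∧ y = Sum.inl b ∧ G.Adj a b) ∨
    (∃ a b, x = Sum.inr a ∧ y = Sum.inr b ∧ H.Adj a b))

/-- Apply a `d × d` matrix to a point of `ℝ^d`. -/
def matApply {d : ℕ} (A : Matrix (Fin d) (Fin d) ℝ)
    (x : EuclideanSpace ℝ (Fin d)) : EuclideanSpace ℝ (Fin d) :=
  WithLp.toLp 2 (fun i => ∑ j, A i j * x j)

/-- An infinitesimal motion of a framework. -/
def IsInfinitesimalMotion {d : ℕ} {V : Type*} (G : SimpleGraph V)
    (p p' : V → EuclideanSpace ℝ (Fin d)) : Prop :=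
  ∀ u v, G.Adj u v → inner ℝ (p u - p v) (p' u - p' v) = (0 : ℝ)

/-- A trivial motion: `p' v = S (p v) + b` for a skew-symmetric matrix `S`. -/
def IsTrivialMotion {d : ℕ} {V : Type*}
    (p p' : V → EuclideanSpace ℝ (Fin d)) : Prop :=
  ∃ (S : Matrix (Fin d) (Fin d) ℝ) (b : EuclideanSpace ℝ (Fin d)),
    S.transpose = -S ∧ ∀ v, p' v = matApply S (p v) + b

/-- A framework is infinitesimally rigid if every infinitesimal motion is trivial. -/
def InfinitesimallyRigid {d : ℕ} {V : Type*} (G : SimpleGraph V)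
    (p : V → EuclideanSpace ℝ (Fin d)) : Prop :=
  ∀ p', IsInfinitesimalMotion G p p' → IsTrivialMotion p p'

/-- An equilibrium stress: a real number on each edge (zero off edges) with the
equilibrium condition at each vertex. -/
def IsEquilibriumStress {d : ℕ} {V : Type*} [Fintype V] (G : SimpleGraph V)
    (p : V → EuclideanSpace ℝ (Fin d)) (ω : Sym2 V → ℝ) : Prop :=
  (∀ e, e ∉ G.edgeSet → ω e = 0) ∧
  ∀ v, ∑ u ∈ G.neighborFinset v, ω s(u, v) • (p v - p u) = 0

/-- The point `x` lies on the quadric `(A, c, D)`: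
`xᵀ A x + 2⟨c, x⟩ + D = 0`. -/
def OnQuadric {d : ℕ} (A : Matrix (Fin d) (Fin d) ℝ) (c : EuclideanSpace ℝ (Fin d))
    (D : ℝ) (x : EuclideanSpace ℝ (Fin d)) : Prop :=
  (∑ i, ∑ j, x i * A i j * x j) + 2 * (∑ i, c i * x i) + D = 0

/-- The polarized quadric constraint for a pair of points:
`xᵀ A y + ⟨c, x + y⟩ + D = 0`. -/
def PolarConstraint {d : ℕ} (A : Matrix (Fin d) (Fin d) ℝ)
    (c : EuclideanSpace ℝ (Fin d)) (D : ℝ) (x y : EuclideanSpace ℝ (Fin d)) : Prop :=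
  (∑ i, ∑ j, x i * A i j * y j) + (∑ i, c i * (x i + y i)) + D = 0

/-- The vector space of equilibrium stresses of the framework `(G, p)`. -/
def stressSpace (d : ℕ) {V : Type*} [Fintype V] (G : SimpleGraph V)
    (p : V → EuclideanSpace ℝ (Fin d)) : Submodule ℝ (Sym2 V → ℝ) where
  carrier := {ω | IsEquilibriumStress G p ω}
  zero_mem' := by
    refine ⟨fun e _ => rfl, fun v => ?_⟩
    simp
  add_mem' := by
    rintro ω₁ ω₂ ⟨h1, h1'⟩ ⟨h2, h2'⟩
    refine ⟨fun e he => by simp [h1 e he, h2 e he], fun v => ?_⟩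
    simp only [Pi.add_apply, add_smul, Finset.sum_add_distrib, h1' v, h2' v, add_zero]
  smul_mem' := by
    rintro r ω ⟨h1, h2⟩
    refine ⟨fun e he => by simp [h1 e he], fun v => ?_⟩
    simp only [Pi.smul_apply, smul_eq_mul, mul_smul, ← Finset.smul_sum, h2 v, smul_zero]

/-!
A stress of `K_{a,b}` is an `a × b` weight matrix `M`. In homogeneous coordinates
`x̂ = (1, x)` the equilibrium conditions say `∑ j, M i j • ŷ j = r i • x̂ i` and
`∑ i, M i j • x̂ i = c j • ŷ j`, where `r` and `c` are the row and column sums of `M`; hence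
`∑ i, r i • x̂ i x̂ iᵀ = ∑ i j, M i j • x̂ i ŷ jᵀ = ∑ j, c j • ŷ j ŷ jᵀ`.

For a generic configuration with `a + b ≤ (d + 2).choose 2` the `a + b` matrices `x̂ x̂ᵀ` are
linearly independent. They are so for some configuration, since by polarization they span all
symmetric matrices; and linear independence is the nonvanishing of a Gram determinant, a rational
polynomial in the coordinates, which cannot vanish at algebraically independent coordinates
unless it vanishes identically.

So `r = c = 0`, and the stresses are exactly the matrices with `X̂ᵀ M = 0` and `M Ŷ = 0`. Generic
lifted points of either class span `ℝ^(d+1)`, so this space has dimension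
`(a - d - 1) * (b - d - 1)`.
-/

open Module Submodule Matrix Finset

namespace Matrix
variable {K k l m n : Type*} [Field K] [Fintype m] [Fintype n]

theorem linearIndependent_rows_iff_rank_eq_card (A : Matrix m n K) :
    LinearIndependent K A.row ↔ A.rank = Fintype.card m := by
  rw [linearIndependent_iff_card_eq_finrank_span, rank_eq_finrank_span_row, eq_comm]
  rfl

theorem linearIndependent_rows_iff_det_mul_transpose_ne_zero [LinearOrder K]
    [IsStrictOrderedRing K] [DecidableEq m] (A : Matrix m n K) :
    LinearIndependent K A.row ↔ (A * Aᵀ).det ≠ 0 := by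
  rw [← isUnit_iff_ne_zero, ← isUnit_iff_isUnit_det, ← linearIndependent_rows_iff_isUnit,
    linearIndependent_rows_iff_rank_eq_card, linearIndependent_rows_iff_rank_eq_card,
    rank_self_mul_transpose]

def biAnnihilator (A : Matrix k m K) (B : Matrix n l K) : Submodule K (Matrix m n K) where
  carrier := {M | A * M = 0 ∧ M * B = 0}
  zero_mem' := by simp
  add_mem' := by
    rintro M N ⟨hM, hM'⟩ ⟨hN, hN'⟩
    exact ⟨by rw [Matrix.mul_add, hM, hN, add_zero], by rw [Matrix.add_mul, hM', hN', add_zero]⟩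
  smul_mem' := by
    rintro c M ⟨hM, hM'⟩
    exact ⟨by rw [Matrix.mul_smul, hM, smul_zero], by rw [Matrix.smul_mul, hM', smul_zero]⟩

variable {A : Matrix k m K} {B : Matrix n l K}

lemma mem_biAnnihilator {M : Matrix m n K} : M ∈ biAnnihilator A B ↔ A * M = 0 ∧ M * B = 0 :=
  Iff.rfl

variable [Fintype l] (A B)

def biAnnihilatorEquiv [DecidableEq n] : biAnnihilator A B ≃ₗ[K]
    ((n → K) ⧸ LinearMap.range B.mulVecLin →ₗ[K] LinearMap.ker A.mulVecLin) where
  toFun M := (LinearMap.range B.mulVecLin).liftQ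
    (M.1.mulVecLin.codRestrict _ fun v => by
      rw [LinearMap.mem_ker, mulVecLin_apply, mulVecLin_apply, mulVec_mulVec,
        (mem_biAnnihilator.1 M.2).1, zero_mulVec])
    (by rintro _ ⟨w, rfl⟩; ext; simp [mulVec_mulVec, (mem_biAnnihilator.1 M.2).2])
  map_add' M N := linearMap_qext _ (LinearMap.ext fun v => Subtype.ext (by simp))
  map_smul' c M := linearMap_qext _ (LinearMap.ext fun v => Subtype.ext (by simp))
  invFun f := ⟨LinearMap.toMatrix' ((LinearMap.ker A.mulVecLin).subtype ∘ₗ f ∘ₗ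
      (LinearMap.range B.mulVecLin).mkQ), by
    refine mem_biAnnihilator.2 ⟨toLin'.injective (LinearMap.ext fun v => ?_),
      toLin'.injective (LinearMap.ext fun v => ?_)⟩
    · simp only [toLin'_mul, LinearMap.comp_apply, toLin'_toMatrix', coe_subtype, mkQ_apply,
        toLin'_apply, zero_mulVec]
      exact LinearMap.mem_ker.1 (f _).2
    · have hv : (Submodule.Quotient.mk (B *ᵥ v) : (n → K) ⧸ LinearMap.range B.mulVecLin) = 0 :=
        (Submodule.Quotient.mk_eq_zero _).2 ⟨v, rfl⟩
      simp [toLin'_mul, hv]⟩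
  left_inv M := by ext i j; simp
  right_inv f := linearMap_qext _ (LinearMap.ext fun v => Subtype.ext (by simp))

theorem finrank_biAnnihilator :
    finrank K (biAnnihilator A B) = (Fintype.card m - A.rank) * (Fintype.card n - B.rank) := by
  classical
  have hker := LinearMap.finrank_range_add_finrank_ker A.mulVecLin
  have hquot := (LinearMap.range B.mulVecLin).finrank_quotient_add_finrank
  rw [Module.finrank_fintype_fun_eq_card] at hker hquot
  rw [(biAnnihilatorEquiv A B).finrank_eq, finrank_linearMap, mul_comm, rank, rank]
  congr 1 <;> omega

end Matrix

theorem exists_linearIndependent_comp_of_card_le_finrank {K X W ι : Type*} [DivisionRing K]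
    [AddCommGroup W] [Module K W] [FiniteDimensional K W] [Fintype ι] (f : X → W)
    (h : Fintype.card ι ≤ finrank K (span K (Set.range f))) :
    ∃ x : ι → X, LinearIndependent K (f ∘ x) := by
  obtain ⟨κ, a, -, hspan, hli⟩ := exists_linearIndependent' K f
  have := hli.finite
  have := Fintype.ofFinite κ
  rw [← hspan, finrank_span_eq_card hli] at h
  obtain ⟨e⟩ := Function.Embedding.nonempty_of_card_le h
  exact ⟨a ∘ e, hli.comp e e.injective⟩

section Veronese
variable {K n : Type*}

def veronese [Mul K] (u : n → K) : n × n → K := fun q => u q.1 * u q.2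

section CommSemiring
variable [CommSemiring K]

def symProd : (n → K) →ₗ[K] (n → K) →ₗ[K] (n × n → K) :=
  LinearMap.mk₂ K (fun u v q => u q.1 * v q.2 + v q.1 * u q.2)
    (fun _ _ _ => by ext; simp only [Pi.add_apply]; ring)
    (fun _ _ _ => by ext; simp only [Pi.smul_apply, smul_eq_mul]; ring)
    (fun _ _ _ => by ext; simp only [Pi.add_apply]; ring)
    (fun _ _ _ => by ext; simp only [Pi.smul_apply, smul_eq_mul]; ring)

lemma symProd_apply (u v : n → K) (q : n × n) :
    symProd u v q = u q.1 * v q.2 + v q.1 * u q.2 := rfl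

lemma symProd_comm (u v : n → K) : symProd u v = symProd v u := by
  ext q; simp only [symProd_apply]; ring

theorem sum_smul_veronese_eq {α β : Type*} [Fintype α] [Fintype β]
    (M : Matrix α β K) {u : α → n → K} {v : β → n → K}
    (hrow : ∀ i, ∑ j, M i j • v j = (∑ j, M i j) • u i)
    (hcol : ∀ j, ∑ i, M i j • u i = (∑ i, M i j) • v j) :
    ∑ i, (∑ j, M i j) • veronese (u i) = ∑ j, (∑ i, M i j) • veronese (v j) := by
  ext ⟨s, t⟩
  have hrow' i : ∑ j, M i j * v j t = (∑ j, M i j) * u i t := by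
    simpa [Finset.sum_apply] using congrFun (hrow i) t
  have hcol' j : ∑ i, M i j * u i s = (∑ i, M i j) * v j s := by
    simpa [Finset.sum_apply] using congrFun (hcol j) s
  simp only [Finset.sum_apply, Pi.smul_apply, smul_eq_mul, veronese]
  calc ∑ i, (∑ j, M i j) * (u i s * u i t)
      = ∑ i, ∑ j, M i j * u i s * v j t := by
        refine Finset.sum_congr rfl fun i _ => ?_
        rw [mul_left_comm, ← hrow', Finset.mul_sum]
        exact Finset.sum_congr rfl fun j _ => by ring
    _ = ∑ j, (∑ i, M i j) * (v j s * v j t) := by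
        rw [Finset.sum_comm]
        refine Finset.sum_congr rfl fun j _ => ?_
        rw [← mul_assoc, ← hcol', Finset.sum_mul]

variable [DecidableEq n]

def symBasis : Sym2 n → n × n → K :=
  Sym2.lift ⟨fun s t => symProd (Pi.single s 1) (Pi.single t 1), fun _ _ => symProd_comm _ _⟩

lemma symBasis_apply_eq_zero {e : Sym2 n} {s t : n} (h : e ≠ s(s, t)) :
    symBasis (K := K) e (s, t) = 0 := by
  induction e using Sym2.ind with
  | _ u v =>
    simp only [symBasis, Sym2.lift_mk, symProd_apply, Pi.single_apply]
    by_cases h1 : s = u <;> by_cases h2 : t = v <;> by_cases h3 : s = v <;>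
      by_cases h4 : t = u <;> simp_all [Sym2.eq_swap]

end CommSemiring

lemma veronese_two_smul_sub [CommRing K] (u v : n → K) :
    veronese ((2 : K) • v - u) = (4 : K) • veronese v - (2 : K) • symProd u v + veronese u := by
  ext q; simp only [veronese, symProd_apply, Pi.add_apply, Pi.sub_apply, Pi.smul_apply,
    smul_eq_mul]; ring

theorem linearIndependent_symBasis [Field K] [CharZero K] [Fintype n] [DecidableEq n] :
    LinearIndependent K (symBasis (K := K) (n := n)) := by
  refine Fintype.linearIndependent_iff.mpr fun g hg e => ?_
  induction e using Sym2.ind with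
  | _ s t =>
    have h := congrFun hg (s, t)
    rw [Finset.sum_apply, Finset.sum_eq_single s(s, t) (fun e _ he => by
      rw [Pi.smul_apply, symBasis_apply_eq_zero he, smul_zero]) (by simp)] at h
    have hne : symBasis (K := K) s(s, t) (s, t) ≠ 0 := by
      simp only [symBasis, Sym2.lift_mk, symProd_apply, Pi.single_apply]
      split_ifs <;> norm_num
    simpa [hne] using h

end Veronese

open MvPolynomial in
theorem linearIndependent_rows_aeval_of_algebraicIndependent {R K σ m n : Type*} [CommRing R]
    [Field K] [LinearOrder K] [IsStrictOrderedRing K] [Algebra R K] [Fintype m] [DecidableEq m]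
    [Fintype n] (W : Matrix m n (MvPolynomial σ R)) {φ ψ : σ → K}
    (hφ : AlgebraicIndependent R φ) (hψ : LinearIndependent K (W.map (aeval ψ)).row) :
    LinearIndependent K (W.map (aeval φ)).row := by
  have hdet : ∀ χ : σ → K, (W.map (aeval χ) * (W.map (aeval χ))ᵀ).det =
      aeval χ (W * Wᵀ).det := fun χ => by
    rw [AlgHom.map_det, AlgHom.mapMatrix_apply, Matrix.map_mul, Matrix.transpose_map]
  rw [Matrix.linearIndependent_rows_iff_det_mul_transpose_ne_zero, hdet] at hψ ⊢
  exact fun h => hψ (by rw [hφ (h.trans (map_zero _).symm), map_zero])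

section AffineLift
variable {d : ℕ}

def affineLift (x : EuclideanSpace ℝ (Fin d)) : Fin (d + 1) → ℝ := Fin.cons 1 x.ofLp

@[simp] lemma affineLift_zero (x : EuclideanSpace ℝ (Fin d)) : affineLift x 0 = 1 := rfl

@[simp] lemma affineLift_succ (x : EuclideanSpace ℝ (Fin d)) (i : Fin d) :
    affineLift x i.succ = x i := rfl

theorem sum_smul_sub_eq_zero_iff_affineLift {ι : Type*} [Fintype ι] (w : ι → ℝ)
    (z : ι → EuclideanSpace ℝ (Fin d)) (x : EuclideanSpace ℝ (Fin d)) :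
    ∑ k, w k • (x - z k) = 0 ↔ ∑ k, w k • affineLift (z k) = (∑ k, w k) • affineLift x := by
  simp only [funext_iff, Fin.forall_fin_succ, WithLp.ext_iff]
  simp [Finset.sum_apply, mul_sub, Finset.sum_mul, sub_eq_zero, eq_comm (a := ∑ k, w k * x _)]

def liftMatrix {α : Type*} (x : α → EuclideanSpace ℝ (Fin d)) : Matrix α (Fin (d + 1)) ℝ :=
  .of fun i => affineLift (x i)

theorem span_range_affineLift : span ℝ (Set.range (affineLift (d := d))) = ⊤ := by
  refine eq_top_iff.mpr fun u _ => ?_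
  have hu : u = u 0 • affineLift 0 + (affineLift (WithLp.toLp 2 (Fin.tail u)) - affineLift 0) := by
    ext t; refine Fin.cases ?_ (fun i => ?_) t <;> simp [Fin.tail]
  rw [hu]
  exact add_mem (smul_mem _ _ (subset_span ⟨0, rfl⟩))
    (sub_mem (subset_span ⟨_, rfl⟩) (subset_span ⟨0, rfl⟩))

lemma affineLift_two_smul_sub (x y : EuclideanSpace ℝ (Fin d)) :
    affineLift ((2 : ℝ) • y - x) = (2 : ℝ) • affineLift y - affineLift x := by
  ext t; refine Fin.cases ?_ (fun i => ?_) t <;> norm_num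

lemma symProd_affineLift_mem_span (x y : EuclideanSpace ℝ (Fin d)) :
    symProd (affineLift x) (affineLift y) ∈
      span ℝ (Set.range fun z : EuclideanSpace ℝ (Fin d) => veronese (affineLift z)) := by
  -- polarization along the affine line through `x` and `y`
  have h : symProd (affineLift x) (affineLift y) = (2 : ℝ) • veronese (affineLift y) +
      (2⁻¹ : ℝ) • (veronese (affineLift x) - veronese (affineLift ((2 : ℝ) • y - x))) := by
    rw [affineLift_two_smul_sub, veronese_two_smul_sub]
    ext q; simp only [Pi.add_apply, Pi.sub_apply, Pi.smul_apply, smul_eq_mul]; ring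
  rw [h]
  exact add_mem (smul_mem _ _ (subset_span ⟨y, rfl⟩))
    (smul_mem _ _ (sub_mem (subset_span ⟨x, rfl⟩) (subset_span ⟨_, rfl⟩)))

theorem choose_two_le_finrank_span_veronese :
    (d + 2).choose 2 ≤ finrank ℝ
      (span ℝ (Set.range fun x : EuclideanSpace ℝ (Fin d) => veronese (affineLift x))) := by
  have hsym : ∀ e, symBasis e ∈
      span ℝ (Set.range fun x : EuclideanSpace ℝ (Fin d) => veronese (affineLift x)) := by
    have h : map₂ symProd ⊤ ⊤ ≤
        span ℝ (Set.range fun x : EuclideanSpace ℝ (Fin d) => veronese (affineLift x)) := by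
      rw [← span_range_affineLift, map₂_span_span, span_le]
      rintro _ ⟨_, ⟨x, rfl⟩, _, ⟨y, rfl⟩, rfl⟩
      exact symProd_affineLift_mem_span x y
    intro e
    induction e using Sym2.ind with
    | _ s t => exact h (apply_mem_map₂ _ mem_top mem_top)
  calc (d + 2).choose 2 = Fintype.card (Sym2 (Fin (d + 1))) := by simp [Sym2.card]
    _ = finrank ℝ (span ℝ (Set.range symBasis)) :=
        (finrank_span_eq_card linearIndependent_symBasis).symm
    _ ≤ _ := Submodule.finrank_mono (span_le.2 (Set.range_subset_iff.2 hsym))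

end AffineLift

section Generic
variable {d : ℕ} {V : Type*}

theorem Generic.comp {W : Type*} {p : V → EuclideanSpace ℝ (Fin d)} (hp : Generic p) {f : W → V}
    (hf : Function.Injective f) : Generic (p ∘ f) :=
  AlgebraicIndependent.comp hp (Prod.map f id) (hf.prodMap Function.injective_id)

open MvPolynomial in
theorem Generic.linearIndependent_comp_of_card_le_finrank [Fintype V] {n : Type*} [Fintype n]
    {p : V → EuclideanSpace ℝ (Fin d)} (hp : Generic p)
    (g : EuclideanSpace ℝ (Fin d) → n → ℝ) (G : n → MvPolynomial (Fin d) ℚ)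
    (hG : ∀ x t, aeval x.ofLp (G t) = g x t)
    (hV : Fintype.card V ≤ finrank ℝ (span ℝ (Set.range g))) :
    LinearIndependent ℝ (g ∘ p) := by
  classical
  obtain ⟨q, hq⟩ := exists_linearIndependent_comp_of_card_le_finrank g hV
  let W : Matrix V n (MvPolynomial (V × Fin d) ℚ) := .of fun v t => rename (Prod.mk v) (G t)
  have hW : ∀ r : V → EuclideanSpace ℝ (Fin d),
      W.map (aeval fun x => r x.1 x.2) = .of fun v => g (r v) := fun r => by
    ext v t
    simp only [W, Matrix.map_apply, Matrix.of_apply, aeval_rename]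
    exact hG (r v) t
  have := linearIndependent_rows_aeval_of_algebraicIndependent W hp (ψ := fun x => q x.1 x.2)
    (by rw [hW]; exact hq)
  rwa [hW] at this

def affineLiftPoly : Fin (d + 1) → MvPolynomial (Fin d) ℚ := Fin.cons 1 MvPolynomial.X

lemma aeval_affineLiftPoly (x : EuclideanSpace ℝ (Fin d)) (t : Fin (d + 1)) :
    MvPolynomial.aeval x.ofLp (affineLiftPoly t) = affineLift x t := by
  refine Fin.cases ?_ (fun i => ?_) t <;> simp [affineLiftPoly]

variable [Fintype V] {p : V → EuclideanSpace ℝ (Fin d)}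

theorem Generic.linearIndependent_affineLift (hp : Generic p) (hV : Fintype.card V ≤ d + 1) :
    LinearIndependent ℝ fun v => affineLift (p v) :=
  hp.linearIndependent_comp_of_card_le_finrank affineLift affineLiftPoly aeval_affineLiftPoly
    (by rwa [span_range_affineLift, finrank_top, finrank_fin_fun])

theorem Generic.linearIndependent_veronese (hp : Generic p)
    (hV : Fintype.card V ≤ (d + 2).choose 2) :
    LinearIndependent ℝ fun v => veronese (affineLift (p v)) :=
  hp.linearIndependent_comp_of_card_le_finrank _
    (fun q => affineLiftPoly q.1 * affineLiftPoly q.2) (fun x q => by simp [veronese, aeval_affineLiftPoly])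
    (hV.trans choose_two_le_finrank_span_veronese)

theorem Generic.rank_liftMatrix (hp : Generic p) (hV : d + 1 ≤ Fintype.card V) :
    (liftMatrix p).rank = d + 1 := by
  obtain ⟨e⟩ := Function.Embedding.nonempty_of_card_le
    (by rwa [Fintype.card_fin] : Fintype.card (Fin (d + 1)) ≤ Fintype.card V)
  have htop := ((hp.comp e.injective).linearIndependent_affineLift (by simp)
    ).span_eq_top_of_card_eq_finrank (by simp)
  have hrows : span ℝ (Set.range (liftMatrix p).row) = ⊤ :=
    eq_top_iff.2 (htop ▸ span_mono (Set.range_comp_subset_range e (liftMatrix p).row))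
  rw [rank_eq_finrank_span_row, hrows, finrank_top, finrank_fin_fun]

end Generic

section BipartiteEquilibrium
variable {d : ℕ} {α β : Type*} [Fintype α] [Fintype β]

lemma mem_biAnnihilator_liftMatrix_iff (x : α → EuclideanSpace ℝ (Fin d))
    (y : β → EuclideanSpace ℝ (Fin d)) (M : Matrix α β ℝ) :
    M ∈ biAnnihilator (liftMatrix x)ᵀ (liftMatrix y) ↔
      (∀ i, ∑ j, M i j • affineLift (y j) = 0) ∧ ∀ j, ∑ i, M i j • affineLift (x i) = 0 := by
  simp only [mem_biAnnihilator, ← Matrix.ext_iff, funext_iff, mul_apply, transpose_apply,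
    liftMatrix, of_apply, Finset.sum_apply, Pi.smul_apply, smul_eq_mul, Matrix.zero_apply,
    Pi.zero_apply]
  rw [and_comm, forall_comm (α := Fin (d + 1))]
  simp only [mul_comm]

theorem equilibrium_iff_mem_biAnnihilator {p : α ⊕ β → EuclideanSpace ℝ (Fin d)}
    (hp : LinearIndependent ℝ fun v => veronese (affineLift (p v))) (M : Matrix α β ℝ) :
    ((∀ i, ∑ j, M i j • (p (.inl i) - p (.inr j)) = 0) ∧
        ∀ j, ∑ i, M i j • (p (.inr j) - p (.inl i)) = 0) ↔
      M ∈ biAnnihilator (liftMatrix (p ∘ .inl))ᵀ (liftMatrix (p ∘ .inr)) := by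
  simp only [sum_smul_sub_eq_zero_iff_affineLift, mem_biAnnihilator_liftMatrix_iff,
    Function.comp_apply]
  constructor
  · rintro ⟨hrow, hcol⟩
    have hzero := Fintype.linearIndependent_iff.1 hp
      (Sum.elim (fun i => ∑ j, M i j) fun j => -∑ i, M i j)
      (by simp [Fintype.sum_sum_type, sum_smul_veronese_eq M hrow hcol, neg_smul])
    refine ⟨fun i => ?_, fun j => ?_⟩
    · rw [hrow, show ∑ j, M i j = 0 from hzero (.inl i), zero_smul]
    · rw [hcol, show ∑ i, M i j = 0 from neg_eq_zero.1 (hzero (.inr j)), zero_smul]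
  · rintro ⟨hrow, hcol⟩
    refine ⟨fun i => ?_, fun j => ?_⟩
    · rw [hrow, (by simpa [Finset.sum_apply] using congrFun (hrow i) 0 : ∑ j, M i j = 0),
        zero_smul]
    · rw [hcol, (by simpa [Finset.sum_apply] using congrFun (hcol j) 0 : ∑ i, M i j = 0),
        zero_smul]

end BipartiteEquilibrium

section CompleteBipartite
variable {d : ℕ} {α β : Type*}

def bipartiteEdgeWeight (M : Matrix α β ℝ) : Sym2 (α ⊕ β) → ℝ :=
  Sym2.lift ⟨Sum.elim (fun i => Sum.elim 0 (M i)) (fun j => Sum.elim (M · j) 0),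
    by rintro (_ | _) (_ | _) <;> rfl⟩

variable [Fintype α] [Fintype β]

lemma completeBipartiteGraph_neighborFinset_inl (i : α) :
    (completeBipartiteGraph α β).neighborFinset (.inl i) = univ.map .inr := by
  ext (_ | _) <;> simp

lemma completeBipartiteGraph_neighborFinset_inr (j : β) :
    (completeBipartiteGraph α β).neighborFinset (.inr j) = univ.map .inl := by
  ext (_ | _) <;> simp

lemma mem_stressSpace_completeBipartiteGraph_iff {p : α ⊕ β → EuclideanSpace ℝ (Fin d)}
    {ω : Sym2 (α ⊕ β) → ℝ} :
    ω ∈ stressSpace d (completeBipartiteGraph α β) p ↔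
      (∀ e, e ∉ (completeBipartiteGraph α β).edgeSet → ω e = 0) ∧
      (∀ i, ∑ j, ω s(.inl i, .inr j) • (p (.inl i) - p (.inr j)) = 0) ∧
      ∀ j, ∑ i, ω s(.inl i, .inr j) • (p (.inr j) - p (.inl i)) = 0 := by
  change IsEquilibriumStress _ _ _ ↔ _
  simp [IsEquilibriumStress, Sum.forall, completeBipartiteGraph_neighborFinset_inl,
    completeBipartiteGraph_neighborFinset_inr, Sym2.eq_swap (a := Sum.inr _)]

lemma bipartiteEdgeWeight_mem_stressSpace {p : α ⊕ β → EuclideanSpace ℝ (Fin d)}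
    {M : Matrix α β ℝ} (hM : (∀ i, ∑ j, M i j • (p (.inl i) - p (.inr j)) = 0) ∧
        ∀ j, ∑ i, M i j • (p (.inr j) - p (.inl i)) = 0) :
    bipartiteEdgeWeight M ∈ stressSpace d (completeBipartiteGraph α β) p := by
  refine mem_stressSpace_completeBipartiteGraph_iff.2 ⟨fun e he => ?_, hM⟩
  induction e using Sym2.ind with
  | _ u v => cases u <;> cases v <;> first | rfl | simp at he

lemma bipartiteEdgeWeight_eq_of_mem_stressSpace {p : α ⊕ β → EuclideanSpace ℝ (Fin d)}
    {ω : Sym2 (α ⊕ β) → ℝ} (hω : ω ∈ stressSpace d (completeBipartiteGraph α β) p) :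
    bipartiteEdgeWeight (.of fun i j => ω s(.inl i, .inr j)) = ω := by
  have hoff := (mem_stressSpace_completeBipartiteGraph_iff.1 hω).1
  funext e
  induction e using Sym2.ind with
  | _ u v =>
    cases u <;> cases v <;>
      first | rfl | exact Sym2.eq_swap ▸ rfl | exact (hoff _ (by simp)).symm

def stressSpaceCompleteBipartiteEquiv {p : α ⊕ β → EuclideanSpace ℝ (Fin d)}
    (hp : LinearIndependent ℝ fun v => veronese (affineLift (p v))) :
    stressSpace d (completeBipartiteGraph α β) p ≃ₗ[ℝ]
      biAnnihilator (liftMatrix (p ∘ .inl))ᵀ (liftMatrix (p ∘ .inr)) where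
  toFun ω := ⟨.of fun i j => ω.1 s(.inl i, .inr j), (equilibrium_iff_mem_biAnnihilator hp _).1
    (mem_stressSpace_completeBipartiteGraph_iff.1 ω.2).2⟩
  map_add' _ _ := rfl
  map_smul' _ _ := rfl
  invFun M := ⟨bipartiteEdgeWeight M.1,
    bipartiteEdgeWeight_mem_stressSpace ((equilibrium_iff_mem_biAnnihilator hp _).2 M.2)⟩
  left_inv ω := Subtype.ext (bipartiteEdgeWeight_eq_of_mem_stressSpace ω.2)
  right_inv _ := rfl

end CompleteBipartite

/-- Theorem (Bolker–Roth): for `d+1 ≤ a, b` and `a + b ≤ C(d+2, 2)`, the space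
of equilibrium stresses of a generic framework of `K_{a,b}` in `ℝ^d` has
dimension `(a - d - 1)(b - d - 1)`. -/
theorem bolker_roth (d a b : ℕ) (ha : d + 1 ≤ a) (hb : d + 1 ≤ b)
    (hab : a + b ≤ (d + 2).choose 2)
    (p : Fin a ⊕ Fin b → EuclideanSpace ℝ (Fin d)) (hp : Generic p) :
    Module.finrank ℝ (stressSpace d (completeBipartiteGraph (Fin a) (Fin b)) p) =
      (a - d - 1) * (b - d - 1) := by
  have hver := hp.linearIndependent_veronese (by simpa using hab)
  rw [(stressSpaceCompleteBipartiteEquiv hver).finrank_eq, finrank_biAnnihilator, rank_transpose,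
    (hp.comp Sum.inl_injective).rank_liftMatrix (by simpa using ha),
    (hp.comp Sum.inr_injective).rank_liftMatrix (by simpa using hb)]
  simp [Nat.sub_sub]

end
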